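/- Let (G, B) be a metric n-Lie algebra with Levi decomposition G = S ⊕ R, where R is the radical and S is a strong semisimple subalgebra. Then G has no strong semisimple ideals if and only if R^⊥ ⊆ R. -/

import Mathlib

open scoped BigOperators

section NLiePreamble

variable {n : ℕ} {G : Type*} [AddCommGroup G] [Module ℂ G]

/-- The inner derivation `ad_y z = [y₁, …, y_{n+1}, z]` determined by an
`(n+2)`-ary alternating bracket. -/
def nAd (br : AlternatingMap ℂ G G (Fin (n + 2))) (y : Fin (n + 1) → G) (z : G) : G :=
  br (Fin.snoc y z)

/-- The generalized Jacobi identity: the bracket makes `G` an `(n+2)`-Lie algebra. -/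
def IsNLie (br : AlternatingMap ℂ G G (Fin (n + 2))) : Prop :=
  ∀ (x : Fin (n + 2) → G) (y : Fin (n + 1) → G),
    nAd br y (br x) = ∑ i, br (Function.update x i (nAd br y (x i)))

/-- A submodule `I` is an ideal: `[I, G, …, G] ⊆ I`. -/
def IsIdeal (br : AlternatingMap ℂ G G (Fin (n + 2))) (I : Submodule ℂ G) : Prop :=
  ∀ (y : Fin (n + 1) → G), ∀ x ∈ I, br (Fin.snoc y x) ∈ I

/-- Invariance of a bilinear form under the bracket. -/
def IsInvariantForm (br : AlternatingMap ℂ G G (Fin (n + 2)))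
    (K : LinearMap.BilinForm ℂ G) : Prop :=
  ∀ (x : Fin (n + 1) → G) (y₁ y₂ : G),
    K (br (Fin.snoc x y₁)) y₂ = - K (br (Fin.snoc x y₂)) y₁

/-- A metric on an `n`-Lie algebra: a nondegenerate invariant symmetric bilinear form. -/
def IsMetric (br : AlternatingMap ℂ G G (Fin (n + 2)))
    (B : LinearMap.BilinForm ℂ G) : Prop :=
  B.Nondegenerate ∧ (∀ x y : G, B x y = B y x) ∧ IsInvariantForm br B

/-- The span `[W₁, …, W_{n+2}]` of all brackets with entries in the given subspaces. -/
def bracketSpan (br : AlternatingMap ℂ G G (Fin (n + 2)))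
    (W : Fin (n + 2) → Submodule ℂ G) : Submodule ℂ G :=
  Submodule.span ℂ {z | ∃ w : Fin (n + 2) → G, (∀ i, w i ∈ W i) ∧ z = br w}

/-- The derived algebra `[G, …, G]`. -/
def derivedAlg (br : AlternatingMap ℂ G G (Fin (n + 2))) : Submodule ℂ G :=
  bracketSpan br fun _ => ⊤

/-- `[I, …, I]` for a subspace `I`. -/
def derivedStep (br : AlternatingMap ℂ G G (Fin (n + 2))) (I : Submodule ℂ G) :
    Submodule ℂ G :=
  bracketSpan br fun _ => I

/-- `[J, H, G, …, G]` for subspaces `J, H`. -/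
def pairBracket (br : AlternatingMap ℂ G G (Fin (n + 2))) (J H : Submodule ℂ G) :
    Submodule ℂ G :=
  bracketSpan br (Fin.cons J (Fin.cons H fun _ => (⊤ : Submodule ℂ G)))

/-- `[I, G, …, G]` for a subspace `I`. -/
def idealBracket (br : AlternatingMap ℂ G G (Fin (n + 2))) (I : Submodule ℂ G) :
    Submodule ℂ G :=
  bracketSpan br (Fin.cons I fun _ => (⊤ : Submodule ℂ G))

/-- The centralizer `C_G(I) = {x : [x, I, G, …, G] = 0}` of a subspace `I`. -/
def centralizer (br : AlternatingMap ℂ G G (Fin (n + 2))) (I : Submodule ℂ G) :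
    Submodule ℂ G where
  carrier := {x | ∀ v ∈ I, ∀ y : Fin n → G, br (Fin.cons x (Fin.cons v y)) = 0}
  add_mem' := by
    intro a b ha hb v hv y
    have := br.toMultilinearMap.cons_add (Fin.cons v y) a b
    simp only [AlternatingMap.coe_multilinearMap] at this
    rw [this, ha v hv y, hb v hv y, add_zero]
  zero_mem' := by
    intro v hv y
    have := br.toMultilinearMap.cons_smul (Fin.cons v y) (0 : ℂ) 0
    simpa using (br.toMultilinearMap.map_coord_zero (m := Fin.cons 0 (Fin.cons v y)) 0 rfl)
  smul_mem' := by
    intro c a ha v hv y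
    have := br.toMultilinearMap.cons_smul (Fin.cons v y) c a
    simp only [AlternatingMap.coe_multilinearMap] at this
    rw [this, ha v hv y, smul_zero]

/-- The center `C(G)`. -/
def center (br : AlternatingMap ℂ G G (Fin (n + 2))) : Submodule ℂ G :=
  centralizer br ⊤

/-- Nondegeneracy of `B` restricted to a subspace `W`. -/
def NondegOn (B : LinearMap.BilinForm ℂ G) (W : Submodule ℂ G) : Prop :=
  ∀ x ∈ W, (∀ y ∈ W, B x y = 0) → x = 0

/-- `(G, B)` is `B`-irreducible: no nontrivial nondegenerate ideals. -/
def BIrreducible (br : AlternatingMap ℂ G G (Fin (n + 2)))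
    (B : LinearMap.BilinForm ℂ G) : Prop :=
  ∀ I : Submodule ℂ G, IsIdeal br I → NondegOn B I → I = ⊥ ∨ I = ⊤

/-- `W` is a subalgebra. -/
def IsSubalgebra (br : AlternatingMap ℂ G G (Fin (n + 2))) (W : Submodule ℂ G) : Prop :=
  ∀ x : Fin (n + 2) → G, (∀ i, x i ∈ W) → br x ∈ W

/-- `I` is an ideal of the subalgebra `W`. -/
def IsIdealOf (br : AlternatingMap ℂ G G (Fin (n + 2))) (W I : Submodule ℂ G) : Prop :=
  I ≤ W ∧ ∀ (y : Fin (n + 1) → G), (∀ i, y i ∈ W) → ∀ x ∈ I, br (Fin.snoc y x) ∈ I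

/-- The subalgebra `W` is a simple `n`-Lie algebra. -/
def IsSimpleAlg (br : AlternatingMap ℂ G G (Fin (n + 2))) (W : Submodule ℂ G) : Prop :=
  derivedStep br W ≠ ⊥ ∧ ∀ I : Submodule ℂ G, IsIdealOf br W I → I = ⊥ ∨ I = W

/-- The subalgebra `W` is strong semisimple: a direct sum of simple ideals. -/
def IsStrongSemisimple (br : AlternatingMap ℂ G G (Fin (n + 2)))
    (W : Submodule ℂ G) : Prop :=
  ∃ (m : ℕ) (S : Fin m → Submodule ℂ G),
    (∀ i, IsIdealOf br W (S i) ∧ IsSimpleAlg br (S i)) ∧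
    iSupIndep S ∧ (⨆ i, S i) = W

/-- `I` is solvable (via the derived series). -/
def NLieSolvable (br : AlternatingMap ℂ G G (Fin (n + 2))) (I : Submodule ℂ G) : Prop :=
  ∃ k : ℕ, (derivedStep br)^[k] I = ⊥

/-- `R` is the radical: the maximal solvable ideal. -/
def NLieRadical (br : AlternatingMap ℂ G G (Fin (n + 2))) (R : Submodule ℂ G) : Prop :=
  IsIdeal br R ∧ NLieSolvable br R ∧
    ∀ I : Submodule ℂ G, IsIdeal br I → NLieSolvable br I → I ≤ R

/-- A Levi decomposition `G = S ⊕ R`. -/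
def IsLeviDecomp (br : AlternatingMap ℂ G G (Fin (n + 2)))
    (S R : Submodule ℂ G) : Prop :=
  NLieRadical br R ∧ IsSubalgebra br S ∧ IsStrongSemisimple br S ∧ IsCompl S R

/-- A minimal ideal of `G`. -/
def IsMinimalIdeal (br : AlternatingMap ℂ G G (Fin (n + 2))) (J : Submodule ℂ G) : Prop :=
  IsIdeal br J ∧ J ≠ ⊥ ∧
    ∀ I : Submodule ℂ G, IsIdeal br I → I ≤ J → I = ⊥ ∨ I = J

/-- The socle: the sum of all minimal ideals. -/
def socle (br : AlternatingMap ℂ G G (Fin (n + 2))) : Submodule ℂ G :=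
  sSup {J | IsMinimalIdeal br J}

/-- `H` is an `S`-submodule: `[S, …, S, H] ⊆ H`. -/
def IsSModule (br : AlternatingMap ℂ G G (Fin (n + 2))) (S H : Submodule ℂ G) : Prop :=
  ∀ (y : Fin (n + 1) → G), (∀ i, y i ∈ S) → ∀ x ∈ H, br (Fin.snoc y x) ∈ H

/-- `H` is an irreducible `S`-submodule. -/
def IsIrreducibleSModule (br : AlternatingMap ℂ G G (Fin (n + 2)))
    (S H : Submodule ℂ G) : Prop :=
  IsSModule br S H ∧ H ≠ ⊥ ∧
    ∀ K : Submodule ℂ G, K ≤ H → IsSModule br S K → K = ⊥ ∨ K = H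

/-- The space of invariant symmetric bilinear forms on `G`. -/
def invSymForms (br : AlternatingMap ℂ G G (Fin (n + 2))) :
    Submodule ℂ (LinearMap.BilinForm ℂ G) where
  carrier := {K | (∀ x y : G, K x y = K y x) ∧ IsInvariantForm br K}
  add_mem' := by
    rintro K L ⟨hK1, hK2⟩ ⟨hL1, hL2⟩
    refine ⟨fun x y => by simp [hK1 x y, hL1 x y], fun x y₁ y₂ => ?_⟩
    simp only [LinearMap.add_apply]
    rw [hK2 x y₁ y₂, hL2 x y₁ y₂]; ring
  zero_mem' := ⟨fun x y => by simp, fun x y₁ y₂ => by simp⟩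
  smul_mem' := by
    rintro c K ⟨hK1, hK2⟩
    refine ⟨fun x y => by simp [hK1 x y], fun x y₁ y₂ => ?_⟩
    simp only [LinearMap.smul_apply, smul_eq_mul]
    rw [hK2 x y₁ y₂]; ring

/-- The span of all nondegenerate invariant symmetric bilinear forms (the metric space `B(G)`). -/
def metricSpan (br : AlternatingMap ℂ G G (Fin (n + 2))) :
    Submodule ℂ (LinearMap.BilinForm ℂ G) :=
  Submodule.span ℂ {K : LinearMap.BilinForm ℂ G | IsMetric br K}

/-- `Γ_B(G)`: `B`-self-adjoint elements of the centroid. -/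
def centroidB (br : AlternatingMap ℂ G G (Fin (n + 2)))
    (B : LinearMap.BilinForm ℂ G) : Submodule ℂ (G →ₗ[ℂ] G) where
  carrier := {φ | (∀ (x : Fin (n + 1) → G) (z : G),
      φ (br (Fin.snoc x z)) = br (Fin.snoc x (φ z))) ∧
    ∀ x y : G, B (φ x) y = B x (φ y)}
  add_mem' := by
    rintro φ ψ ⟨hφ1, hφ2⟩ ⟨hψ1, hψ2⟩
    constructor
    · intro x z
      have hadd := br.toMultilinearMap.snoc_add x (φ z) (ψ z)
      simp only [AlternatingMap.coe_multilinearMap] at hadd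
      simp [hφ1 x z, hψ1 x z, hadd]
    · intro x y; simp [hφ2 x y, hψ2 x y]
  zero_mem' := by
    constructor
    · intro x z
      have h0 := br.toMultilinearMap.map_coord_zero (m := Fin.snoc x (0 : G)) (Fin.last _)
        (by simp)
      simp only [AlternatingMap.coe_multilinearMap] at h0
      simp [h0]
    · intro x y; simp
  smul_mem' := by
    rintro c φ ⟨hφ1, hφ2⟩
    constructor
    · intro x z
      have hs := br.toMultilinearMap.snoc_smul x c (φ z)
      simp only [AlternatingMap.coe_multilinearMap] at hs
      simp [hφ1 x z, hs]
    · intro x y; simp [hφ2 x y]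

end NLiePreamble


variable {n : ℕ} {G : Type*} [AddCommGroup G] [Module ℂ G]

/-!
Write `H = R^⊥`; invariance of `B` makes it an ideal.

If `R^⊥ ⊆ R` and `I` is a strong semisimple ideal, then `I` is perfect, and `I ∩ R = 0` because
a simple summand of `I` lying in `R` would be both perfect and solvable. Invariance gives
`B(R, [I, …, I]) = B([I, …, I, R], I) ⊆ B(I ∩ R, I) = 0`, so `I ⊆ R^⊥ ⊆ R` and `I = 0`.

Conversely, if `H ⊄ R` then `H` is not solvable, so `W = [H, …, H]` is a nonzero ideal. Let `π` be
the projection onto `S` along `R`, a bracket homomorphism. An element `z ∈ W ∩ R` is orthogonal to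
`R` (as `z ∈ H`) and to every simple summand `S_i` of `S`: to those inside `π(H)` since
`z ∈ H ∩ R`, and to the others since `[H, …, H, S_i]` projects into `S_i ∩ π(H) = 0`. Hence
`W ∩ R = 0`, `π(W)` is a nonzero ideal of `S` containing some `S_i`, and `W ∩ π⁻¹(S_i) ≅ S_i` is a
simple ideal of `G`.
-/

section

variable {br : AlternatingMap ℂ G G (Fin (n + 2))}

variable (br) in
def nAdLinear (y : Fin (n + 1) → G) : G →ₗ[ℂ] G where
  toFun := nAd br y
  map_add' a b := br.toMultilinearMap.snoc_add y a b
  map_smul' c a := br.toMultilinearMap.snoc_smul y c a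

@[simp]
theorem nAdLinear_apply (y : Fin (n + 1) → G) (z : G) :
    nAdLinear br y z = br (Fin.snoc y z) := rfl

theorem snoc_mem {W : Submodule ℂ G} {y : Fin (n + 1) → G} {x : G} (hy : ∀ i, y i ∈ W)
    (hx : x ∈ W) (i : Fin (n + 2)) : (Fin.snoc y x : Fin (n + 2) → G) i ∈ W :=
  Fin.lastCases (by simpa using hx) (fun i => by simpa using hy i) i

theorem IsSModule.bracket_mem {W I : Submodule ℂ G} (hI : IsSModule br W I)
    {w : Fin (n + 2) → G} (hw : ∀ i, w i ∈ W) {j : Fin (n + 2)} (hj : w j ∈ I) :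
    br w ∈ I := by
  have last_mem : ∀ v : Fin (n + 2) → G, (∀ i, v i ∈ W) → v (Fin.last _) ∈ I → br v ∈ I :=
    fun v hv hlast => by
      simpa only [Fin.snoc_init_self] using hI (Fin.init v) (fun i => hv _) _ hlast
  rcases eq_or_ne j (Fin.last _) with rfl | hne
  · exact last_mem w hw hj
  · have := last_mem (w ∘ Equiv.swap j (Fin.last _)) (fun i => hw _) (by simpa using hj)
    rw [br.map_swap w hne] at this
    simpa using neg_mem this

theorem IsIdeal.isSModule {I : Submodule ℂ G} (hI : IsIdeal br I) : IsSModule br ⊤ I :=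
  fun y _ => hI y

theorem IsIdeal.bracket_mem {I : Submodule ℂ G} (hI : IsIdeal br I) {w : Fin (n + 2) → G}
    {j : Fin (n + 2)} (hj : w j ∈ I) : br w ∈ I :=
  hI.isSModule.bracket_mem (fun _ => Submodule.mem_top) hj

theorem IsIdealOf.isSModule {W T : Submodule ℂ G} (hT : IsIdealOf br W T) :
    IsSModule br W T :=
  hT.2

theorem IsIdealOf.isSModule_self {W T : Submodule ℂ G} (hT : IsIdealOf br W T) :
    IsSModule br T T :=
  fun y hy => hT.2 y fun i => hT.1 (hy i)

theorem IsIdealOf.bracket_eq_zero_of_disjoint {W I J : Submodule ℂ G} (hI : IsIdealOf br W I)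
    (hJ : IsIdealOf br W J) (hIJ : Disjoint I J) {y : Fin (n + 1) → G} (hy : ∀ i, y i ∈ I)
    {x : G} (hx : x ∈ J) : br (Fin.snoc y x) = 0 := by
  have hyW : ∀ i, y i ∈ W := fun i => hI.1 (hy i)
  have hI' : br (Fin.snoc y x) ∈ I :=
    hI.isSModule.bracket_mem (snoc_mem hyW (hJ.1 hx)) (j := Fin.castSucc 0) (by simpa using hy 0)
  exact (Submodule.mem_bot ℂ).1 (hIJ.le_bot ⟨hI', hJ.2 y hyW x hx⟩)

theorem IsIdealOf.inf_eq_bot_or_le {W T K : Submodule ℂ G} (hT : IsIdealOf br W T)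
    (hTs : IsSimpleAlg br T) (hK : IsIdealOf br W K) : T ⊓ K = ⊥ ∨ T ≤ K :=
  (hTs.2 (T ⊓ K) ⟨inf_le_left, fun y hy x hx =>
    ⟨hT.2 y (fun i => hT.1 (hy i)) x hx.1, hK.2 y (fun i => hT.1 (hy i)) x hx.2⟩⟩).imp id
    inf_eq_left.1

theorem bracket_mem_derivedStep {I : Submodule ℂ G} {w : Fin (n + 2) → G}
    (hw : ∀ i, w i ∈ I) : br w ∈ derivedStep br I :=
  Submodule.subset_span ⟨w, hw, rfl⟩

theorem derivedStep_le {I J : Submodule ℂ G}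
    (h : ∀ w : Fin (n + 2) → G, (∀ i, w i ∈ I) → br w ∈ J) : derivedStep br I ≤ J :=
  Submodule.span_le.2 fun _ ⟨w, hw, hz⟩ => hz ▸ h w hw

theorem derivedStep_mono : Monotone (derivedStep br) :=
  fun _ _ hIJ => derivedStep_le fun _ hw => bracket_mem_derivedStep fun i => hIJ (hw i)

theorem derivedStep_bot : derivedStep br (⊥ : Submodule ℂ G) = ⊥ :=
  eq_bot_iff.2 <| derivedStep_le fun w hw => by
    rw [br.map_coord_zero 0 ((Submodule.mem_bot ℂ).1 (hw 0))]
    exact zero_mem _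

theorem IsSModule.derivedStep_le_self {W I : Submodule ℂ G} (hI : IsSModule br W I)
    (hIW : I ≤ W) : derivedStep br I ≤ I :=
  derivedStep_le fun _ hw => hI.bracket_mem (fun i => hIW (hw i)) (hw (Fin.last _))

theorem isSModule_derivedStep (hLie : IsNLie br) {W I : Submodule ℂ G}
    (hI : IsSModule br W I) : IsSModule br W (derivedStep br I) := by
  intro y hy
  suffices h : derivedStep br I ≤ (derivedStep br I).comap (nAdLinear br y) by
    exact fun x hx => h hx
  refine Submodule.span_le.2 ?_
  rintro _ ⟨t, ht, rfl⟩
  change nAd br y (br t) ∈ derivedStep br I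
  rw [hLie t y]
  refine Submodule.sum_mem _ fun i _ => bracket_mem_derivedStep fun k => ?_
  rcases eq_or_ne k i with rfl | hk
  · rw [Function.update_self]
    exact hI y hy _ (ht k)
  · simpa [Function.update_of_ne hk] using ht k

theorem isIdeal_derivedStep (hLie : IsNLie br) {I : Submodule ℂ G} (hI : IsIdeal br I) :
    IsIdeal br (derivedStep br I) :=
  fun y => isSModule_derivedStep hLie hI.isSModule y fun _ => Submodule.mem_top

theorem NLieSolvable.eq_bot_of_le {R T : Submodule ℂ G} (hR : NLieSolvable br R)
    (hT : derivedStep br T = T) (hTR : T ≤ R) : T = ⊥ := by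
  obtain ⟨k, hk⟩ := hR
  rw [← Function.iterate_fixed hT k, eq_bot_iff, ← hk]
  exact derivedStep_mono.iterate k hTR

theorem IsSimpleAlg.ne_bot {T : Submodule ℂ G} (hT : IsSimpleAlg br T) : T ≠ ⊥ :=
  fun h => hT.1 (by rw [h]; exact derivedStep_bot)

theorem IsSimpleAlg.derivedStep_eq (hLie : IsNLie br) {T : Submodule ℂ G}
    (hT : IsSModule br T T) (hTs : IsSimpleAlg br T) : derivedStep br T = T :=
  (hTs.2 _ ⟨hT.derivedStep_le_self le_rfl, isSModule_derivedStep hLie hT⟩).resolve_left hTs.1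

theorem IsSimpleAlg.isStrongSemisimple {T : Submodule ℂ G} (hT : IsSModule br T T)
    (hTs : IsSimpleAlg br T) : IsStrongSemisimple br T :=
  ⟨1, fun _ => T, fun _ => ⟨⟨le_rfl, hT⟩, hTs⟩, iSupIndep_subsingleton _, iSup_const⟩

theorem IsSimpleAlg.eq_zero_of_bracket_eq_zero {T : Submodule ℂ G} (hTs : IsSimpleAlg br T)
    {x : G} (hx : x ∈ T)
    (h : ∀ y : Fin (n + 1) → G, (∀ i, y i ∈ T) → br (Fin.snoc y x) = 0) : x = 0 := by
  let Z := T ⊓ ⨅ (y : Fin (n + 1) → G) (_ : ∀ i, y i ∈ T), LinearMap.ker (nAdLinear br y)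
  have mem_Z : ∀ z, z ∈ Z ↔ z ∈ T ∧ ∀ y : Fin (n + 1) → G, (∀ i, y i ∈ T) →
      br (Fin.snoc y z) = 0 := by
    simp [Z, Submodule.mem_iInf]
  rcases hTs.2 Z ⟨inf_le_left, fun y hy z hz => by simp [((mem_Z z).1 hz).2 y hy]⟩
    with hZ | hZ
  · simpa [hZ] using (mem_Z x).2 ⟨hx, h⟩
  · refine absurd (eq_bot_iff.2 <| derivedStep_le fun w hw => ?_) hTs.1
    have hw0 := ((mem_Z _).1 (hZ ▸ hw (Fin.last _))).2 (Fin.init w) fun i => hw _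
    rw [Fin.snoc_init_self] at hw0
    rw [hw0]
    exact zero_mem _

theorem exists_sum_eq_of_mem_iSup {m : ℕ} {p : Fin m → Submodule ℂ G} {x : G}
    (hx : x ∈ ⨆ i, p i) : ∃ f : Fin m → G, (∀ i, f i ∈ p i) ∧ ∑ i, f i = x := by
  have hx' : x ∈ ⨆ i ∈ Finset.univ, p i := by
    rwa [show (⨆ i ∈ Finset.univ, p i) = ⨆ i, p i by simp]
  obtain ⟨μ, hμ⟩ := (Submodule.mem_iSup_finset_iff_exists_sum p x).1 hx'
  exact ⟨fun i => μ i, fun i => (μ i).2, hμ⟩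

theorem IsStrongSemisimple.exists_isSimpleAlg_le {W K : Submodule ℂ G}
    (hW : IsStrongSemisimple br W) (hK : IsIdealOf br W K) (hKne : K ≠ ⊥) :
    ∃ T, IsIdealOf br W T ∧ IsSimpleAlg br T ∧ T ≤ K := by
  obtain ⟨m, Sc, hSc, hindep, hsup⟩ := hW
  by_contra! hnone
  have hdisj : ∀ i, Disjoint (Sc i) K := fun i => disjoint_iff.2 <|
    ((hSc i).1.inf_eq_bot_or_le (hSc i).2 hK).resolve_right (hnone _ (hSc i).1 (hSc i).2)
  refine hKne (eq_bot_iff.2 fun k hk => ?_)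
  obtain ⟨f, hf, rfl⟩ := exists_sum_eq_of_mem_iSup (hsup ▸ hK.1 hk)
  suffices ∀ j, f j = 0 by simp [this]
  -- each component of `k` is central in its simple summand
  refine fun j => (hSc j).2.eq_zero_of_bracket_eq_zero (hf j) fun y hy => ?_
  have hk0 := (hSc j).1.bracket_eq_zero_of_disjoint hK (hdisj j) hy hk
  rw [← nAdLinear_apply, map_sum] at hk0
  simp only [nAdLinear_apply] at hk0
  rwa [Fintype.sum_eq_single j fun l hl =>
    (hSc j).1.bracket_eq_zero_of_disjoint (hSc l).1 (hindep.pairwiseDisjoint hl.symm) hy (hf l)]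
    at hk0

theorem IsStrongSemisimple.le_derivedStep (hLie : IsNLie br) {I : Submodule ℂ G}
    (hI : IsStrongSemisimple br I) : I ≤ derivedStep br I := by
  obtain ⟨m, Sc, hSc, -, hsup⟩ := hI
  rw [← hsup]
  exact iSup_le fun j => ((hSc j).2.derivedStep_eq hLie (hSc j).1.isSModule_self).ge.trans
    (derivedStep_mono (le_iSup Sc j))

theorem IsStrongSemisimple.inf_eq_bot_of_solvable (hLie : IsNLie br) {I R : Submodule ℂ G}
    (hIss : IsStrongSemisimple br I) (hI : IsIdeal br I) (hR : IsIdeal br R)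
    (hRs : NLieSolvable br R) : I ⊓ R = ⊥ := by
  by_contra hne
  obtain ⟨T, hT, hTs, hTR⟩ := hIss.exists_isSimpleAlg_le
    ⟨inf_le_left, fun y _ x hx => ⟨hI y x hx.1, hR y x hx.2⟩⟩ hne
  exact hTs.ne_bot <|
    hRs.eq_bot_of_le (hTs.derivedStep_eq hLie hT.isSModule_self) (hTR.trans inf_le_right)

section Projection

variable {S R : Submodule ℂ G}

theorem IsIdeal.bracket_sub_bracket_mem (hR : IsIdeal br R) {x x' : Fin (n + 2) → G}
    (h : ∀ i, x i - x' i ∈ R) : br x - br x' ∈ R := by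
  classical
  have hexp := br.map_add_univ x' (x - x')
  rw [add_sub_cancel, ← Finset.add_sum_erase _ _ (Finset.mem_univ Finset.univ),
    Finset.piecewise_univ] at hexp
  rw [hexp, add_sub_cancel_left]
  refine Submodule.sum_mem _ fun s hs => ?_
  obtain ⟨i, hi⟩ : ∃ i, i ∉ s := by
    by_contra! h'
    exact Finset.ne_of_mem_erase hs (Finset.eq_univ_of_forall h')
  exact hR.bracket_mem (j := i) (by simpa [Finset.piecewise_eq_of_notMem _ _ _ hi] using h i)

theorem sub_projection_mem (hc : IsCompl S R) (x : G) : x - S.projection R hc x ∈ R := by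
  rw [← Submodule.projection_eq_self_sub_projection hc]
  exact Submodule.projection_apply_mem _ _

theorem projection_bracket (hR : IsIdeal br R) (hS : IsSubalgebra br S) (hc : IsCompl S R)
    (x : Fin (n + 2) → G) : S.projection R hc (br x) = br (S.projection R hc ∘ x) := by
  have hS' : br (S.projection R hc ∘ x) ∈ S :=
    hS _ fun i => Submodule.projection_apply_mem hc _
  rw [← Submodule.projection_apply_of_mem_left hc hS', ← sub_eq_zero, ← map_sub,
    Submodule.projection_apply_eq_zero_iff]
  exact hR.bracket_sub_bracket_mem fun i => sub_projection_mem hc (x i)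

theorem IsIdeal.isIdealOf_map_projection {I : Submodule ℂ G} (hI : IsIdeal br I)
    (hR : IsIdeal br R) (hS : IsSubalgebra br S) (hc : IsCompl S R) :
    IsIdealOf br S (I.map (S.projection R hc)) := by
  refine ⟨fun _ ⟨g, _, hg⟩ => hg ▸ Submodule.projection_apply_mem hc g,
    fun y hy _ ⟨g, hg, hgx⟩ => ⟨br (Fin.snoc y g), hI y g hg, ?_⟩⟩
  have hy' : S.projection R hc ∘ y = y :=
    funext fun i => Submodule.projection_apply_of_mem_left hc (hy i)
  rw [projection_bracket hR hS hc, Fin.comp_snoc, hy', hgx]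

theorem IsIdealOf.isIdeal_comap_projection (hR : IsIdeal br R) (hS : IsSubalgebra br S)
    (hc : IsCompl S R) {T : Submodule ℂ G} (hT : IsIdealOf br S T) :
    IsIdeal br (T.comap (S.projection R hc)) := fun y x hx => by
  change S.projection R hc (br (Fin.snoc y x)) ∈ T
  rw [projection_bracket hR hS hc, Fin.comp_snoc]
  exact hT.2 _ (fun i => Submodule.projection_apply_mem hc _) _ hx

theorem exists_tuple_mem_of_mem_map {ι M : Type*} [AddCommGroup M] [Module ℂ M]
    {f : G →ₗ[ℂ] M} {I : Submodule ℂ G} {t : ι → M} (ht : ∀ i, t i ∈ I.map f) :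
    ∃ w : ι → G, (∀ i, w i ∈ I) ∧ f ∘ w = t := by
  choose w hw hwt using ht
  exact ⟨w, hw, funext hwt⟩

theorem IsSimpleAlg.of_map {f : G →ₗ[ℂ] G} (hf : ∀ x, f (br x) = br (f ∘ x))
    {I T : Submodule ℂ G} (hinj : I ⊓ LinearMap.ker f = ⊥) (hIT : I.map f = T)
    (hT : IsSimpleAlg br T) : IsSimpleAlg br I := by
  subst hIT
  refine ⟨fun hbot => hT.1 (eq_bot_iff.2 <| derivedStep_le fun t ht => ?_), fun P hP => ?_⟩
  · obtain ⟨w, hw, rfl⟩ := exists_tuple_mem_of_mem_map ht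
    rw [← hf, ← Submodule.map_bot f, ← hbot]
    exact Submodule.mem_map_of_mem (bracket_mem_derivedStep hw)
  have hPI : IsIdealOf br (I.map f) (P.map f) := by
    refine ⟨Submodule.map_mono hP.1, fun y hy _ ⟨p, hp, hpx⟩ => ?_⟩
    obtain ⟨w, hw, rfl⟩ := exists_tuple_mem_of_mem_map hy
    exact ⟨br (Fin.snoc w p), hP.2 w hw p hp, by rw [hf, Fin.comp_snoc, hpx]⟩
  rcases hT.2 _ hPI with h | h
  · exact Or.inl (eq_bot_iff.2 (hinj ▸ le_inf hP.1 (LinearMap.le_ker_iff_map.2 h)))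
  · have hIP : I ≤ P ⊔ LinearMap.ker f := (LinearMap.map_le_map_iff f).1 h.ge
    refine Or.inr ?_
    calc P = P ⊔ LinearMap.ker f ⊓ I := by rw [inf_comm, hinj, sup_bot_eq]
      _ = (P ⊔ LinearMap.ker f) ⊓ I := (sup_inf_assoc_of_le _ hP.1).symm
      _ = I := inf_eq_right.2 hIP

theorem exists_isStrongSemisimple_ideal_of_inf_eq_bot {W : Submodule ℂ G} (hR : IsIdeal br R)
    (hS : IsSubalgebra br S) (hSss : IsStrongSemisimple br S) (hc : IsCompl S R)
    (hW : IsIdeal br W) (hWne : W ≠ ⊥) (hWR : W ⊓ R = ⊥) :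
    ∃ I, IsIdeal br I ∧ IsStrongSemisimple br I ∧ I ≠ ⊥ := by
  set π := S.projection R hc
  have hπW : W.map π ≠ ⊥ := fun h => hWne <| by
    rwa [inf_eq_left.2 (by simpa [π] using LinearMap.le_ker_iff_map.2 h)] at hWR
  obtain ⟨T, hT, hTs, hTW⟩ :=
    hSss.exists_isSimpleAlg_le (hW.isIdealOf_map_projection hR hS hc) hπW
  set I := W ⊓ T.comap π
  have hI : IsIdeal br I := fun y x hx =>
    ⟨hW y x hx.1, hT.isIdeal_comap_projection hR hS hc y x hx.2⟩
  have hIT : I.map π = T := by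
    refine le_antisymm ((Submodule.map_mono inf_le_right).trans (Submodule.map_comap_le _ _))
      fun s hs => ?_
    obtain ⟨w, hw, rfl⟩ := hTW hs
    exact Submodule.mem_map_of_mem ⟨hw, hs⟩
  have hIs : IsSimpleAlg br I := by
    refine hTs.of_map (projection_bracket hR hS hc) (eq_bot_iff.2 ?_) hIT
    rw [Submodule.ker_projection, ← hWR]
    exact inf_le_inf_right R inf_le_left
  exact ⟨I, hI, hIs.isStrongSemisimple fun y _ => hI y, hIs.ne_bot⟩

end Projection

section Metric

variable {B : LinearMap.BilinForm ℂ G} {S R : Submodule ℂ G}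

theorem IsInvariantForm.apply_bracket (hinv : IsInvariantForm br B) (w : Fin (n + 2) → G)
    (z : G) : B (br w) z = -B (br (Fin.snoc (Fin.init w) z)) (w (Fin.last _)) := by
  simpa only [Fin.snoc_init_self] using hinv (Fin.init w) (w (Fin.last _)) z

theorem apply_eq_zero_of_mem_orthogonal {r x : G} (hr : r ∈ R) (hx : x ∈ B.orthogonal R) :
    B r x = 0 :=
  LinearMap.BilinForm.mem_orthogonal_iff.1 hx r hr

theorem isIdeal_orthogonal (hsym : ∀ x y, B x y = B y x) (hinv : IsInvariantForm br B)
    (hR : IsIdeal br R) : IsIdeal br (B.orthogonal R) := fun y x hx =>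
  LinearMap.BilinForm.mem_orthogonal_iff.2 fun r hr => by
    rw [hsym, hinv, apply_eq_zero_of_mem_orthogonal (hR y r hr) hx, neg_zero]

theorem le_orthogonal_of_inf_eq_bot (hsym : ∀ x y, B x y = B y x)
    (hinv : IsInvariantForm br B) {I : Submodule ℂ G} (hI : IsIdeal br I)
    (hperf : I ≤ derivedStep br I) (hR : IsIdeal br R) (hIR : I ⊓ R = ⊥) :
    I ≤ B.orthogonal R := by
  refine hperf.trans <| derivedStep_le fun t ht =>
    LinearMap.BilinForm.mem_orthogonal_iff.2 fun r hr => ?_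
  have h0 : br (Fin.snoc (Fin.init t) r) = 0 := by
    refine (Submodule.mem_bot ℂ).1 (hIR ▸ ⟨hI.bracket_mem (j := Fin.castSucc 0) ?_, hR _ r hr⟩)
    simpa [Fin.init] using ht _
  rw [hsym, hinv.apply_bracket, h0, map_zero, LinearMap.zero_apply, neg_zero]

theorem apply_projection_eq_zero (hsym : ∀ x y, B x y = B y x) (hc : IsCompl S R) {z h : G}
    (hzH : z ∈ B.orthogonal R) (hzR : z ∈ R) (hh : h ∈ B.orthogonal R) :
    B z (S.projection R hc h) = 0 := by
  rw [← sub_sub_cancel h (S.projection R hc h), map_sub, apply_eq_zero_of_mem_orthogonal hzR hh,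
    hsym z, apply_eq_zero_of_mem_orthogonal (sub_projection_mem hc h) hzH, sub_zero]

theorem apply_eq_zero_of_mem_derivedStep_orthogonal (hsym : ∀ x y, B x y = B y x)
    (hinv : IsInvariantForm br B) (hR : IsIdeal br R) (hS : IsSubalgebra br S)
    (hc : IsCompl S R) {T : Submodule ℂ G} (hT : IsIdealOf br S T)
    (hdisj : Disjoint T ((B.orthogonal R).map (S.projection R hc))) {z s : G}
    (hz : z ∈ derivedStep br (B.orthogonal R)) (hs : s ∈ T) : B z s = 0 := by
  have hπH := (isIdeal_orthogonal hsym hinv hR).isIdealOf_map_projection hR hS hc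
  refine (derivedStep_le (J := LinearMap.ker (B.flip s)) fun t ht => ?_) hz
  -- the bracket of `H = R^⊥` with `T` projects into `T ∩ π(H) = 0`
  have hu : br (Fin.snoc (Fin.init t) s) ∈ R := by
    rw [← Submodule.projection_apply_eq_zero_iff hc, projection_bracket hR hS hc, Fin.comp_snoc,
      Submodule.projection_apply_of_mem_left hc (hT.1 hs)]
    exact hπH.bracket_eq_zero_of_disjoint hT hdisj.symm
      (fun i => Submodule.mem_map_of_mem (ht _)) hs
  change B (br t) s = 0
  rw [hinv.apply_bracket, apply_eq_zero_of_mem_orthogonal hu (ht _), neg_zero]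

theorem derivedStep_orthogonal_inf_eq_bot (hB : IsMetric br B) (hR : IsIdeal br R)
    (hS : IsSubalgebra br S) (hSss : IsStrongSemisimple br S) (hc : IsCompl S R) :
    derivedStep br (B.orthogonal R) ⊓ R = ⊥ := by
  obtain ⟨hnd, hsym, hinv⟩ := hB
  have hH := isIdeal_orthogonal hsym hinv hR
  obtain ⟨m, Sc, hSc, -, hsup⟩ := hSss
  refine eq_bot_iff.2 fun z ⟨hzW, hzR⟩ => (Submodule.mem_bot ℂ).2 (hnd.1 z fun g => ?_)
  have hzH : z ∈ B.orthogonal R := hH.isSModule.derivedStep_le_self le_top hzW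
  have hSz : S ≤ LinearMap.ker (B z) := hsup ▸ iSup_le fun i => by
    rcases (hSc i).1.inf_eq_bot_or_le (hSc i).2 (hH.isIdealOf_map_projection hR hS hc)
      with hdisj | hle
    · exact fun s hs => apply_eq_zero_of_mem_derivedStep_orthogonal hsym hinv hR hS hc
        (hSc i).1 (disjoint_iff.2 hdisj) hzW hs
    · rintro _ hs
      obtain ⟨h, hh, rfl⟩ := hle hs
      exact apply_projection_eq_zero hsym hc hzH hzR hh
  obtain ⟨s, hs, r, hr, rfl⟩ := Submodule.mem_sup.1 (hc.sup_eq_top ▸ Submodule.mem_top : g ∈ S ⊔ R)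
  rw [map_add, hSz hs, hsym z, apply_eq_zero_of_mem_orthogonal hr hzH, add_zero]

end Metric

end

theorem no_strong_semisimple_ideal_iff_radical_coisotropic_general
    (br : AlternatingMap ℂ G G (Fin (n + 2))) (hLie : IsNLie br)
    (B : LinearMap.BilinForm ℂ G) (hB : IsMetric br B)
    (S R : Submodule ℂ G) (hLevi : IsLeviDecomp br S R) :
    (∀ I : Submodule ℂ G, IsIdeal br I → IsStrongSemisimple br I → I = ⊥) ↔
      B.orthogonal R ≤ R := by
  obtain ⟨⟨hR, hRs, hRmax⟩, hS, hSss, hc⟩ := hLevi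
  have hH := isIdeal_orthogonal hB.2.1 hB.2.2 hR
  constructor
  · intro hnone
    by_contra hHR
    have hW : derivedStep br (B.orthogonal R) ≠ ⊥ := fun hbot => hHR (hRmax _ hH ⟨1, hbot⟩)
    obtain ⟨I, hI, hIss, hIne⟩ := exists_isStrongSemisimple_ideal_of_inf_eq_bot hR hS hSss hc
      (isIdeal_derivedStep hLie hH) hW (derivedStep_orthogonal_inf_eq_bot hB hR hS hSss hc)
    exact hIne (hnone I hI hIss)
  · intro hHR I hI hIss
    have hIR := hIss.inf_eq_bot_of_solvable hLie hI hR hRs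
    have hIH := le_orthogonal_of_inf_eq_bot hB.2.1 hB.2.2 hI (hIss.le_derivedStep hLie) hR hIR
    rwa [inf_eq_left.2 (hIH.trans hHR)] at hIR

theorem no_strong_semisimple_ideal_iff_radical_coisotropic
    (br : AlternatingMap ℂ G G (Fin (n + 2))) (hLie : IsNLie br)
    [FiniteDimensional ℂ G]
    (B : LinearMap.BilinForm ℂ G) (hB : IsMetric br B)
    (S R : Submodule ℂ G) (hLevi : IsLeviDecomp br S R) :
    (∀ I : Submodule ℂ G, IsIdeal br I → IsStrongSemisimple br I → I = ⊥) ↔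
      B.orthogonal R ≤ R :=
  no_strong_semisimple_ideal_iff_radical_coisotropic_general br hLie B hB S R hLevi
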